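/- R is almost Gorenstein (i.e. mω = m) if and only if ωJ = J** for every non-principal fractional ideal J of R. -/

import Mathlib

open Submodule IsLocalRing

noncomputable section

/-- Length of an `R`-module, defined as the Krull dimension of its submodule lattice. -/
def modLength (R : Type*) [Ring R] (M : Type*) [AddCommGroup M] [Module R M] : WithBot ℕ∞ :=
  Order.krullDim (Submodule R M)

/-- Length of the quotient `I / J` for submodules `J ≤ I` of an ambient module. -/
def qlen (R : Type*) [CommRing R] {K : Type*} [AddCommGroup K] [Module R K]
    (I J : Submodule R K) : WithBot ℕ∞ :=
  modLength R (I ⧸ (J.comap I.subtype))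

/-- The image of an ideal of `R` in `K`, viewed as an `R`-submodule of `K`. -/
def idl (R : Type*) [CommRing R] (K : Type*) [CommRing K] [Algebra R K] (I : Ideal R) :
    Submodule R K :=
  Submodule.map (Algebra.linearMap R K) I

/-- The blowing-up `Λ(I) = ⋃ₙ (Iⁿ : Iⁿ)` of `R` along `I`, inside `K`. -/
def blowup (R : Type*) [CommRing R] (K : Type*) [CommRing K] [Algebra R K] (I : Ideal R) :
    Submodule R K :=
  ⨆ n : ℕ, (idl R K I ^ n) / (idl R K I ^ n)

/-- The set of values of the nonzero elements of a fractional ideal. -/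
def vvals {R : Type*} [CommRing R] {K : Type*} [CommRing K] [Algebra R K]
    (v : K → WithTop ℤ) (J : Submodule R K) : Set (WithTop ℤ) :=
  v '' {y | y ∈ J ∧ y ≠ 0}

/-! If `J` is not principal then `J(R:J) ⊆ m`, because an invertible fractional ideal of a
local domain is principal. So if `mω = m`, then `ωJ(R:J) ⊆ mω = m ⊆ R`, i.e. `ωJ ⊆ J**`; the
reverse inclusion always holds, since duality gives `ω:(ωJ) = (ω:ω):J = R:J` and hence
`ωJ = ω:(R:J) ⊇ R:(R:J)`. Conversely, `m` is not principal because `R ≠ R̄`, so the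
hypothesis applies to `J = m`: then `m ⊆ mω = m** ⊆ R`, and `mω = R` would make `m`
invertible. -/

namespace Submodule

variable {R A : Type*} [CommSemiring R] [CommSemiring A] [Algebra R A]

theorem div_mul_eq_div_div (I J L : Submodule R A) : I / (J * L) = I / J / L :=
  eq_of_forall_le_iff fun N => by
    simp only [le_div_iff_mul_le, mul_right_comm N L J, mul_assoc]

theorem div_le_of_one_le {I L : Submodule R A} (h : 1 ≤ L) : I / L ≤ I := fun x hx => by
  simpa using hx 1 (one_le.mp h)

theorem one_div_one_div_le_mul {ω J : Submodule R A} (hω1 : 1 ≤ ω) (hωω : ω / ω = 1)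
    (hdual : ω / (ω / (ω * J)) = ω * J) : 1 / (1 / J) ≤ ω * J := by
  rw [← hdual, div_mul_eq_div_div, hωω]
  exact fun x hx y hy => hω1 (hx y hy)

end Submodule

section LocalRing

variable {R : Type*} [CommRing R] {K : Type*} [CommRing K] [Algebra R K]

theorem idl_le_one (I : Ideal R) : idl R K I ≤ 1 :=
  fun _ ⟨a, _, ha⟩ => mem_one.mpr ⟨a, ha⟩

variable [IsLocalRing R]

theorem le_idl_maximalIdeal_of_lt_one {N : Submodule R K} (h : N < 1) :
    N ≤ idl R K (maximalIdeal R) := by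
  intro x hx
  obtain ⟨a, rfl⟩ := mem_one.mp (h.le hx)
  refine ⟨a, (mem_maximalIdeal a).mpr fun ha => h.not_ge (one_le.mpr ?_), rfl⟩
  obtain ⟨u, rfl⟩ := ha
  simpa [Algebra.smul_def, ← map_mul] using N.smul_mem (↑u⁻¹ : R) hx

variable [FaithfulSMul R K]

theorem one_notMem_idl_maximalIdeal : (1 : K) ∉ idl R K (maximalIdeal R) := by
  rintro ⟨a, ha, h1⟩
  rw [show a = 1 from FaithfulSMul.algebraMap_injective R K (by simpa using h1)] at ha
  exact (maximalIdeal.isMaximal R).ne_top ((Ideal.eq_top_iff_one _).mpr ha)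

theorem exists_eq_span_singleton_of_mul_eq_one {N N' : Submodule R K} (h : N * N' = 1) :
    ∃ z : K, N = span R {z} := by
  obtain ⟨x, hx, y, hy, hxy⟩ :
      ∃ x ∈ N, ∃ y ∈ N', x * y ∉ idl R K (maximalIdeal R) := by
    by_contra! hall
    exact one_notMem_idl_maximalIdeal (mul_le.mpr hall (h ▸ one_le.mp le_rfl))
  obtain ⟨u, hu⟩ := mem_one.mp (h ▸ mul_mem_mul hx hy)
  obtain ⟨v, rfl⟩ : IsUnit u := by
    by_contra hu'
    exact hxy ⟨u, (mem_maximalIdeal u).mpr hu', hu⟩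
  refine ⟨x, le_antisymm (fun z hz => ?_) (span_le.mpr (Set.singleton_subset_iff.mpr hx))⟩
  obtain ⟨b, hb⟩ := mem_one.mp (h ▸ mul_mem_mul hz hy)
  have hz : z = ((↑v⁻¹ : R) * b) • x := by
    have hv : algebraMap R K ↑v⁻¹ * algebraMap R K ↑v = 1 := by
      rw [← map_mul, Units.inv_mul, map_one]
    calc z = z * (algebraMap R K ↑v⁻¹ * algebraMap R K ↑v) := by rw [hv, mul_one]
      _ = algebraMap R K ↑v⁻¹ * (z * y) * x := by rw [hu]; ring
      _ = ((↑v⁻¹ : R) * b) • x := by rw [Algebra.smul_def, map_mul, hb]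
  exact hz ▸ smul_mem _ _ (mem_span_singleton_self x)

theorem mul_one_div_le_idl_maximalIdeal {J : Submodule R K}
    (hJ : ¬ ∃ z : K, J = span R {z}) : J * (1 / J) ≤ idl R K (maximalIdeal R) :=
  le_idl_maximalIdeal_of_lt_one <| mul_one_div_le_one.lt_of_ne fun h =>
    hJ (exists_eq_span_singleton_of_mul_eq_one h)

end LocalRing

-- A Noetherian local domain with principal maximal ideal is a DVR, hence integrally closed.
theorem idl_maximalIdeal_not_principal {R : Type*} [CommRing R] [IsDomain R] [IsLocalRing R]
    [IsNoetherianRing R] {K : Type*} [Field K] [Algebra R K] [IsFractionRing R K]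
    (h : 1 < (integralClosure R K).toSubmodule) :
    ¬ ∃ z : K, idl R K (maximalIdeal R) = span R {z} := by
  rintro ⟨z, hz⟩
  have : IsPrincipalIdealRing R :=
    ((tfae_of_isNoetherianRing_of_isLocalRing_of_isDomain R).out 4 0).mp
      ((IsFractionRing.coeSubmodule_isPrincipal R K).mp ⟨z, hz⟩)
  rw [IsIntegrallyClosed.integralClosure_eq_bot R K, Algebra.toSubmodule_bot] at h
  exact h.ne rfl

theorem stmt_14_general
    (R : Type*) [CommRing R] [IsDomain R] [IsLocalRing R] [IsNoetherianRing R]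
    (K : Type*) [Field K] [Algebra R K] [IsFractionRing R K]
    [Module.Finite R (integralClosure R K)]
    (ω : Submodule R K) (hω1 : 1 ≤ ω) (hω2 : ω < ((integralClosure R K).toSubmodule))
    (hωω : ω / ω = 1)
    (hωdual : ∀ J : Submodule R K, J ≠ ⊥ → J.FG → ω / (ω / J) = J) :
    idl R K (maximalIdeal R) * ω = idl R K (maximalIdeal R) ↔
      ∀ J : Submodule R K, J ≠ ⊥ → J.FG → (¬ ∃ z : K, J = span R {z}) →
        ω * J = (1 : Submodule R K) / ((1 : Submodule R K) / J) := by
  have hωfg : ω.FG := ((Submodule.fg_top _).mp Module.Finite.fg_top).of_le hω2.le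
  have hm := idl_maximalIdeal_not_principal (hω1.trans_lt hω2)
  constructor
  · intro hmω J hJ0 hJfg hJp
    have hωJ : ω * J ≠ ⊥ :=
      ((bot_lt_iff_ne_bot.mpr hJ0).trans_le (le_mul_of_one_le_left' hω1)).ne'
    refine le_antisymm ?_ (one_div_one_div_le_mul hω1 hωω (hωdual _ hωJ (hωfg.mul hJfg)))
    rw [Submodule.le_div_iff_mul_le, mul_assoc]
    calc ω * (J * (1 / J)) ≤ ω * idl R K (maximalIdeal R) :=
          mul_le_mul_right (mul_one_div_le_idl_maximalIdeal hJp) ω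
      _ = idl R K (maximalIdeal R) := by rw [mul_comm, hmω]
      _ ≤ 1 := idl_le_one _
  · intro h
    have hm0 : idl R K (maximalIdeal R) ≠ ⊥ := fun h0 =>
      hm ⟨0, h0.trans (span_zero_singleton R).symm⟩
    have hle : idl R K (maximalIdeal R) * ω ≤ 1 := by
      rw [mul_comm, h _ hm0 ((IsNoetherian.noetherian _).map _) hm]
      exact Submodule.div_le_of_one_le (one_le_one_div.mpr (idl_le_one _))
    exact le_antisymm
      (le_idl_maximalIdeal_of_lt_one (hle.lt_of_ne (hm ∘ exists_eq_span_singleton_of_mul_eq_one)))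
      (le_mul_of_one_le_right' hω1)

theorem stmt_14
    (R : Type*) [CommRing R] [IsDomain R] [IsLocalRing R] [IsNoetherianRing R]
    (K : Type*) [Field K] [Algebra R K] [IsFractionRing R K]
    [IsDiscreteValuationRing (integralClosure R K)]
    [Module.Finite R (integralClosure R K)]
    (hres : ∀ y : integralClosure R K, ∃ a : R,
      y - algebraMap R (integralClosure R K) a ∈ maximalIdeal (integralClosure R K))
    (hkinf : Infinite (ResidueField R))
    (ω : Submodule R K) (hω1 : 1 ≤ ω) (hω2 : ω < ((integralClosure R K).toSubmodule))
    (hωω : ω / ω = 1)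
    (hωdual : ∀ J : Submodule R K, J ≠ ⊥ → J.FG → ω / (ω / J) = J) :
    idl R K (maximalIdeal R) * ω = idl R K (maximalIdeal R) ↔
      ∀ J : Submodule R K, J ≠ ⊥ → J.FG → (¬ ∃ z : K, J = span R {z}) →
        ω * J = (1 : Submodule R K) / ((1 : Submodule R K) / J) :=
  stmt_14_general R K ω hω1 hω2 hωω hωdual

end
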